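/- Let β₀, β₁ ∈ (−π/2, π/2) and 0 < ρ₀ < ρ₁. Then k_ℍ(ρ₀·e^{iβ₀}, ρ₁·e^{iβ₁}) ≥ k_ℍ(ρ₀, ρ₁), i.e. among points at given moduli ρ₀ < ρ₁ in the half-plane, the hyperbolic distance is minimized when both lie on the positive real axis. -/

import Mathlib

/-!
`k_ℍ = artanh t` for the pseudo-hyperbolic distance `t(z, w) = |z - w| / |z + w̄|`, so it suffices
to compare `t`. Since `|z + w̄|² - |z - w|² = 4 Re z Re w`, we have
`1 - t² = 4 Re z Re w / |z + w̄|²`, which for `z = ρ₀ e^{iβ₀}`, `w = ρ₁ e^{iβ₁}` equals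
`4 ρ₀ ρ₁ cos β₀ cos β₁ / (ρ₀² + ρ₁² + 2 ρ₀ ρ₁ cos (β₀ + β₁))`; this is largest at `β₀ = β₁ = 0`.
-/

open Complex Set Real

/-- The hyperbolic (Poincaré) distance on the right half-plane
`ℍ = {z : 0 < Re z}`, given by the explicit formula
`k_ℍ(z,w) = (1/2)·log((1+|(z−w)/(z+conj w)|)/(1−|(z−w)/(z+conj w)|))`. -/
noncomputable def kH (z w : ℂ) : ℝ :=
  Real.log ((1 + ‖(z - w) / (z + (starRingEnd ℂ) w)‖) /
    (1 - ‖(z - w) / (z + (starRingEnd ℂ) w)‖)) / 2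

open ComplexConjugate

namespace HalfPlane

noncomputable def pseudoDist (z w : ℂ) : ℝ := ‖(z - w) / (z + conj w)‖

theorem kH_eq (z w : ℂ) :
    kH z w = Real.log ((1 + pseudoDist z w) / (1 - pseudoDist z w)) / 2 := rfl

theorem pseudoDist_nonneg (z w : ℂ) : 0 ≤ pseudoDist z w := norm_nonneg _

theorem normSq_add_conj_sub_normSq_sub (z w : ℂ) :
    normSq (z + conj w) - normSq (z - w) = 4 * z.re * w.re := by
  simp only [normSq_apply, add_re, add_im, sub_re, sub_im, conj_re, conj_im]
  ring

theorem one_sub_pseudoDist_sq {z w : ℂ} (h : z + conj w ≠ 0) :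
    1 - pseudoDist z w ^ 2 = 4 * z.re * w.re / normSq (z + conj w) := by
  have hN : normSq (z + conj w) ≠ 0 := normSq_eq_zero.not.mpr h
  rw [pseudoDist, norm_div, div_pow, Complex.sq_norm, Complex.sq_norm,
    ← normSq_add_conj_sub_normSq_sub, sub_div, div_self hN]

theorem add_conj_ne_zero {z w : ℂ} (hz : 0 < z.re) (hw : 0 < w.re) : z + conj w ≠ 0 := by
  intro h
  have hre := congrArg re h
  simp only [add_re, conj_re, zero_re] at hre
  linarith

theorem pseudoDist_lt_one {z w : ℂ} (hz : 0 < z.re) (hw : 0 < w.re) : pseudoDist z w < 1 := by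
  have hzw := add_conj_ne_zero hz hw
  have hsq : 0 < 1 - pseudoDist z w ^ 2 := by
    rw [one_sub_pseudoDist_sq hzw]
    have := normSq_pos.mpr hzw
    positivity
  exact (sq_lt_one_iff₀ (pseudoDist_nonneg z w)).mp (by linarith)

theorem pseudoDist_le_of_re_mul_re_div_normSq_le {z w z' w' : ℂ} (h : z + conj w ≠ 0)
    (h' : z' + conj w' ≠ 0)
    (hle : z'.re * w'.re / normSq (z' + conj w') ≤ z.re * w.re / normSq (z + conj w)) :
    pseudoDist z w ≤ pseudoDist z' w' := by
  have hsq : pseudoDist z w ^ 2 ≤ pseudoDist z' w' ^ 2 := by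
    have e := one_sub_pseudoDist_sq h
    have e' := one_sub_pseudoDist_sq h'
    rw [mul_assoc, mul_div_assoc] at e e'
    linarith
  exact (pow_le_pow_iff_left₀ (pseudoDist_nonneg z w) (pseudoDist_nonneg z' w')
    two_ne_zero).mp hsq

theorem kH_le_kH_of_pseudoDist_le {z w z' w' : ℂ} (hle : pseudoDist z w ≤ pseudoDist z' w')
    (hlt : pseudoDist z' w' < 1) : kH z w ≤ kH z' w' := by
  have hnn := pseudoDist_nonneg z w
  rw [kH_eq, kH_eq]
  gcongr
  · exact div_pos (by linarith) (by linarith)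
  · linarith

theorem re_ofReal_mul_exp (ρ β : ℝ) : ((ρ : ℂ) * exp (β * I)).re = ρ * Real.cos β := by
  rw [re_ofReal_mul, exp_ofReal_mul_I_re]

theorem normSq_ofReal_mul_exp_add_conj (ρ₀ ρ₁ β₀ β₁ : ℝ) :
    normSq ((ρ₀ : ℂ) * exp (β₀ * I) + conj ((ρ₁ : ℂ) * exp (β₁ * I))) =
      ρ₀ ^ 2 + ρ₁ ^ 2 + 2 * ρ₀ * ρ₁ * Real.cos (β₀ + β₁) := by
  simp only [normSq_apply, add_re, add_im, conj_re, conj_im, re_ofReal_mul, im_ofReal_mul,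
    exp_ofReal_mul_I_re, exp_ofReal_mul_I_im, Real.cos_add]
  linear_combination ρ₀ ^ 2 * Real.sin_sq_add_cos_sq β₀ + ρ₁ ^ 2 * Real.sin_sq_add_cos_sq β₁

end HalfPlane

/- The right side minus the left is
`((ρ₀ + ρ₁)² (1 - cos (β₀ - β₁)) + (ρ₀ - ρ₁)² (1 - cos (β₀ + β₁))) / 2`. -/
theorem cos_mul_cos_mul_add_sq_le (ρ₀ ρ₁ β₀ β₁ : ℝ) :
    Real.cos β₀ * Real.cos β₁ * (ρ₀ + ρ₁) ^ 2 ≤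
      ρ₀ ^ 2 + ρ₁ ^ 2 + 2 * ρ₀ * ρ₁ * Real.cos (β₀ + β₁) := by
  have hsub := mul_nonneg (sq_nonneg (ρ₀ + ρ₁)) (sub_nonneg.mpr (Real.cos_le_one (β₀ - β₁)))
  have hadd := mul_nonneg (sq_nonneg (ρ₀ - ρ₁)) (sub_nonneg.mpr (Real.cos_le_one (β₀ + β₁)))
  rw [Real.cos_sub, Real.cos_add] at *
  linarith

open HalfPlane in
theorem stmt_5 (β₀ β₁ ρ₀ ρ₁ : ℝ)
    (hβ₀ : β₀ ∈ Set.Ioo (-(π/2)) (π/2)) (hβ₁ : β₁ ∈ Set.Ioo (-(π/2)) (π/2))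
    (h0 : 0 < ρ₀) (h01 : ρ₀ < ρ₁) :
    kH (ρ₀ : ℂ) (ρ₁ : ℂ) ≤
      kH ((ρ₀ : ℂ) * Complex.exp (β₀ * Complex.I)) ((ρ₁ : ℂ) * Complex.exp (β₁ * Complex.I)) := by
  have h1 : 0 < ρ₁ := h0.trans h01
  have hc₀ : 0 < Real.cos β₀ := Real.cos_pos_of_mem_Ioo hβ₀
  have hc₁ : 0 < Real.cos β₁ := Real.cos_pos_of_mem_Ioo hβ₁
  have hz : 0 < ((ρ₀ : ℂ) * exp (β₀ * I)).re := by rw [re_ofReal_mul_exp]; positivity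
  have hw : 0 < ((ρ₁ : ℂ) * exp (β₁ * I)).re := by rw [re_ofReal_mul_exp]; positivity
  refine kH_le_kH_of_pseudoDist_le ?_ (pseudoDist_lt_one hz hw)
  refine pseudoDist_le_of_re_mul_re_div_normSq_le (add_conj_ne_zero (by simpa) (by simpa))
    (add_conj_ne_zero hz hw) ?_
  have hN : normSq ((ρ₀ : ℂ) + conj (ρ₁ : ℂ)) = (ρ₀ + ρ₁) ^ 2 := by
    rw [conj_ofReal, ← ofReal_add, normSq_ofReal, sq]
  have htrig := cos_mul_cos_mul_add_sq_le ρ₀ ρ₁ β₀ β₁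
  have hpos : 0 < ρ₀ ^ 2 + ρ₁ ^ 2 + 2 * ρ₀ * ρ₁ * Real.cos (β₀ + β₁) :=
    lt_of_lt_of_le (by positivity) htrig
  rw [normSq_ofReal_mul_exp_add_conj, hN, re_ofReal_mul_exp, re_ofReal_mul_exp, ofReal_re,
    ofReal_re, div_le_div_iff₀ hpos (by positivity)]
  nlinarith [mul_pos h0 h1]
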